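/- The minimum of log( N(L+1)^{K−1} · max_{m ∈ {1,…,M}} p_m ) over all feasible distributions p for the alternative PIR scheme equals log((1−L(D−1))/N) + log(N(L+1)^{K−1}). -/

import Mathlib

/-!
The costs are `L` on the first `N` options and `L + 1` on the other `M - N`, so feasibility
pins the mass on the expensive options to `s = L (D - 1)`; the `N` cheap options then carry
`1 - s`, and one of them has probability at least `(1 - s) / N`. Spreading `1 - s` evenly
over the cheap options and `s` evenly over the expensive ones attains this bound as soon as
`s / (M - N) ≤ (1 - s) / N`, i.e. `s ≤ 1 - (L + 1)^(-(K - 1))`. That follows from the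
hypothesis on `D` because `L + 1 ≤ N` gives `L N^(-k) ≤ L (L + 1)^(-k)`, and the right-hand
sides telescope.
-/

open Finset Real

/-- Download cost of option `m` (0-indexed: options `1,…,N` of the paper are `m < N`)
in the symmetric TSC scheme with `N` databases and `K` messages. -/
noncomputable def tscCost (N m : ℕ) : ℝ := if m < N then (N : ℝ) - 1 else (N : ℝ)

/-- `p` is a feasible query distribution for the symmetric TSC scheme with expected
normalized download cost `D`. -/
def TSCFeasible (N K : ℕ) (D : ℝ) (p : ℕ → ℝ) : Prop :=
  (∀ m ∈ Finset.range (N ^ K), 0 ≤ p m) ∧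
  (∑ m ∈ Finset.range (N ^ K), p m = 1) ∧
  (1 / ((N : ℝ) - 1)) * (∑ m ∈ Finset.range (N ^ K), p m * tscCost N m) = D

/-- The optimal distribution `p*` for the symmetric TSC scheme. -/
noncomputable def tscOpt (N K : ℕ) (D : ℝ) (m : ℕ) : ℝ :=
  if m < N then (1 - ((N : ℝ) - 1) * (D - 1)) / N
  else ((N : ℝ) - 1) * (D - 1) / ((N : ℝ) ^ K - (N : ℝ))

/-- Download cost of option `m` (0-indexed) in the alternative PIR scheme with
message length `L`. -/
noncomputable def altCost (N L m : ℕ) : ℝ := if m < N then (L : ℝ) else (L : ℝ) + 1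

/-- `p` is a feasible query distribution for the alternative PIR scheme
(`M = N (L+1)^(K-1)` options) with expected normalized download cost `D`. -/
def AltFeasible (N K L : ℕ) (D : ℝ) (p : ℕ → ℝ) : Prop :=
  (∀ m ∈ Finset.range (N * (L + 1) ^ (K - 1)), 0 ≤ p m) ∧
  (∑ m ∈ Finset.range (N * (L + 1) ^ (K - 1)), p m = 1) ∧
  (1 / (L : ℝ)) * (∑ m ∈ Finset.range (N * (L + 1) ^ (K - 1)), p m * altCost N L m) = D

/-- The optimal distribution `q*` for the alternative PIR scheme. -/
noncomputable def altOpt (N K L : ℕ) (D : ℝ) (m : ℕ) : ℝ :=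
  if m < N then (1 - (L : ℝ) * (D - 1)) / N
  else (L : ℝ) * (D - 1) / ((N : ℝ) * ((L : ℝ) + 1) ^ (K - 1) - (N : ℝ))

/-- Rényi divergence of order `α` (`0 < α`, `α ≠ 1`) of a distribution `p` on `M`
options from the uniform distribution on those options (natural logarithm). -/
noncomputable def renyiDiv (M : ℕ) (α : ℝ) (p : ℕ → ℝ) : ℝ :=
  (1 / (α - 1)) * Real.log ((M : ℝ) ^ (α - 1) * ∑ m ∈ Finset.range M, p m ^ α)

/-- Kullback–Leibler divergence of a distribution `p` on `M` options from the uniform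
distribution on those options (natural logarithm, with `0 · log 0 = 0`). -/
noncomputable def klDivUnif (M : ℕ) (p : ℕ → ℝ) : ℝ :=
  ∑ m ∈ Finset.range M, p m * Real.log ((M : ℝ) * p m)

/-- The maximum of `p` over the `M` options. -/
noncomputable def maxOver (M : ℕ) (hM : M ≠ 0) (p : ℕ → ℝ) : ℝ :=
  (Finset.range M).sup' (Finset.nonempty_range_iff.mpr hM) p

theorem mul_sum_range_inv_pow_le {L N : ℝ} (hL : 0 ≤ L) (hLN : L + 1 ≤ N) (K : ℕ) :
    L * ∑ k ∈ range K, (N ^ k)⁻¹ ≤ (L + 1) * (1 - ((L + 1) ^ K)⁻¹) := by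
  calc L * ∑ k ∈ range K, (N ^ k)⁻¹
      ≤ ∑ k ∈ range K, L * ((L + 1) ^ k)⁻¹ := by
        rw [mul_sum]
        gcongr
    _ = ∑ k ∈ range K, ((L + 1) * ((L + 1) ^ k)⁻¹ - (L + 1) * ((L + 1) ^ (k + 1))⁻¹) := by
        refine sum_congr rfl fun k _ => ?_
        field_simp
        ring
    _ = (L + 1) * (1 - ((L + 1) ^ K)⁻¹) := by
        rw [sum_range_sub' (fun k => (L + 1) * ((L + 1) ^ k)⁻¹)]
        ring

theorem mul_sub_one_le_one_sub_inv_pow {L N D : ℝ} {K : ℕ} (hK : 1 ≤ K) (hL : 0 ≤ L)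
    (hLN : L + 1 ≤ N) (hD : D ≤ ∑ k ∈ range K, (N ^ k)⁻¹) :
    L * (D - 1) ≤ 1 - ((L + 1) ^ (K - 1))⁻¹ := by
  have hpow : (L + 1) ^ K = (L + 1) * (L + 1) ^ (K - 1) := by
    rw [← pow_succ']
    congr 1
    omega
  have hcap : L * ∑ k ∈ range K, (N ^ k)⁻¹ ≤ L + 1 - ((L + 1) ^ (K - 1))⁻¹ := by
    convert mul_sum_range_inv_pow_le hL hLN K using 1
    rw [hpow]
    field_simp
  nlinarith [mul_le_mul_of_nonneg_left hD hL]

def HasTailMass (M N : ℕ) (s : ℝ) (p : ℕ → ℝ) : Prop :=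
  (∀ m ∈ range M, 0 ≤ p m) ∧ ∑ m ∈ range M, p m = 1 ∧ ∑ m ∈ Ico N M, p m = s

section TailMass

variable {M N : ℕ} {s : ℝ}

theorem div_le_maxOver_of_hasTailMass (hM : M ≠ 0) (hN : 0 < N) (hNM : N ≤ M) {p : ℕ → ℝ}
    (hp : HasTailMass M N s p) : (1 - s) / N ≤ maxOver M hM p := by
  obtain ⟨-, hp1, hps⟩ := hp
  have hhead : ∑ m ∈ range N, p m = 1 - s := by
    linarith [sum_range_add_sum_Ico p hNM]
  have hle : ∑ m ∈ range N, p m ≤ N * maxOver M hM p := by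
    calc ∑ m ∈ range N, p m ≤ ∑ m ∈ range N, maxOver M hM p :=
          sum_le_sum fun m hm => le_sup' p (mem_range.2 ((mem_range.1 hm).trans_le hNM))
      _ = N * maxOver M hM p := by rw [sum_const, card_range, nsmul_eq_mul]
  rw [div_le_iff₀ (by exact_mod_cast hN)]
  linarith

theorem exists_hasTailMass_maxOver_eq (hM : M ≠ 0) (hN : 0 < N) (hNM : N < M) (hs0 : 0 ≤ s)
    (hsM : s * M ≤ M - N) : ∃ p, HasTailMass M N s p ∧ maxOver M hM p = (1 - s) / N := by
  have hNR : (0 : ℝ) < N := by exact_mod_cast hN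
  have hNMR : (N : ℝ) < M := by exact_mod_cast hNM
  set a := (1 - s) / N with ha
  set b := s / ((M : ℝ) - N) with hb
  have ha0 : 0 ≤ a := div_nonneg (by nlinarith) hNR.le
  have hb0 : 0 ≤ b := div_nonneg hs0 (by linarith)
  have hba : b ≤ a := by
    rw [ha, hb, div_le_div_iff₀ (by linarith) hNR]
    nlinarith
  have hhead : ∑ m ∈ range N, (if m < N then a else b) = 1 - s := by
    rw [sum_congr rfl fun m hm => if_pos (mem_range.1 hm), sum_const, card_range, nsmul_eq_mul,
      ha]
    field_simp
  have htail : ∑ m ∈ Ico N M, (if m < N then a else b) = s := by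
    rw [sum_congr rfl fun m hm => if_neg (not_lt.2 (mem_Ico.1 hm).1), sum_const, Nat.card_Ico,
      nsmul_eq_mul, Nat.cast_sub hNM.le, hb]
    field_simp [sub_ne_zero.2 hNMR.ne']
  refine ⟨fun m => if m < N then a else b, ⟨fun m _ => ?_, ?_, htail⟩, ?_⟩
  · dsimp only
    split_ifs
    exacts [ha0, hb0]
  · rw [← sum_range_add_sum_Ico _ hNM.le, hhead, htail, sub_add_cancel]
  · refine le_antisymm (sup'_le _ _ fun m _ => ?_) ?_
    · split_ifs
      exacts [le_rfl, hba]
    · have h0 := le_sup' (fun m => if m < N then a else b) (mem_range.2 (hN.trans hNM))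
      rwa [if_pos hN] at h0

theorem isLeast_maxOver_of_hasTailMass (hM : M ≠ 0) (hN : 0 < N) (hNM : N < M) (hs0 : 0 ≤ s)
    (hsM : s * M ≤ M - N) :
    IsLeast {v | ∃ p, HasTailMass M N s p ∧ v = maxOver M hM p} ((1 - s) / N) := by
  obtain ⟨p, hp, hmax⟩ := exists_hasTailMass_maxOver_eq hM hN hNM hs0 hsM
  exact ⟨⟨p, hp, hmax.symm⟩, by
    rintro _ ⟨q, hq, rfl⟩
    exact div_le_maxOver_of_hasTailMass hM hN hNM.le hq⟩

end TailMass

theorem sum_mul_altCost {M N : ℕ} (L : ℕ) (hNM : N ≤ M) (p : ℕ → ℝ) :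
    ∑ m ∈ range M, p m * altCost N L m = L * ∑ m ∈ range M, p m + ∑ m ∈ Ico N M, p m := by
  rw [← sum_range_add_sum_Ico _ hNM, ← sum_range_add_sum_Ico p hNM, mul_add, mul_sum, mul_sum,
    add_assoc, ← sum_add_distrib]
  congr 1
  · exact sum_congr rfl fun m hm => by rw [altCost, if_pos (mem_range.1 hm), mul_comm]
  · exact sum_congr rfl fun m hm => by
      rw [altCost, if_neg (not_lt.2 (mem_Ico.1 hm).1)]
      ring

theorem altFeasible_iff {N K L : ℕ} (hL : L ≠ 0) {D : ℝ} {p : ℕ → ℝ} :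
    AltFeasible N K L D p ↔ HasTailMass (N * (L + 1) ^ (K - 1)) N (L * (D - 1)) p := by
  have hNM : N ≤ N * (L + 1) ^ (K - 1) := Nat.le_mul_of_pos_right N (by positivity)
  have hLR : (L : ℝ) ≠ 0 := by exact_mod_cast hL
  rw [AltFeasible, HasTailMass, sum_mul_altCost L hNM]
  refine and_congr_right' (and_congr_right fun h1 => ?_)
  rw [h1]
  field_simp
  constructor <;> intro h <;> linarith

/-- the minimum of `log (N(L+1)^(K-1) · max_m pₘ)` over feasible
distributions of the alternative PIR scheme equals
`log((1-L(D-1))/N) + log(N(L+1)^(K-1))`. -/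
theorem alt_infty_tradeoff (N K L : ℕ) (hN : 3 ≤ N) (hK : 2 ≤ K)
    (hL1 : 1 ≤ L) (hL2 : L ≤ N - 2) (D : ℝ)
    (hD1 : 1 ≤ D) (hD2 : D ≤ ∑ k ∈ Finset.range K, ((N : ℝ) ^ k)⁻¹) :
    IsLeast
      {v : ℝ | ∃ p : ℕ → ℝ, AltFeasible N K L D p ∧
        v = Real.log ((N : ℝ) * ((L : ℝ) + 1) ^ (K - 1) *
          maxOver (N * (L + 1) ^ (K - 1))
            (Nat.mul_ne_zero (show N ≠ 0 by omega)
              (pow_ne_zero (K - 1) (show L + 1 ≠ 0 by omega))) p)}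
      (Real.log ((1 - (L : ℝ) * (D - 1)) / N) +
        Real.log ((N : ℝ) * ((L : ℝ) + 1) ^ (K - 1))) := by
  have hLR : (0 : ℝ) < L := by exact_mod_cast hL1
  have hNR : (0 : ℝ) < N := by exact_mod_cast (show 0 < N by omega)
  have hLN : (L : ℝ) + 1 ≤ N := by exact_mod_cast (show L + 1 ≤ N by omega)
  set T : ℝ := ((L : ℝ) + 1) ^ (K - 1)
  have hT : 0 < T := by positivity
  have hNM : N < N * (L + 1) ^ (K - 1) :=
    lt_mul_right (by omega) (Nat.one_lt_pow (by omega) (by omega))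
  set s := (L : ℝ) * (D - 1)
  have hs0 : 0 ≤ s := mul_nonneg hLR.le (by linarith)
  have hsT : s ≤ 1 - T⁻¹ := mul_sub_one_le_one_sub_inv_pow (by omega) hLR.le hLN hD2
  have hsM : s * (N * (L + 1) ^ (K - 1) : ℕ) ≤ (N * (L + 1) ^ (K - 1) : ℕ) - N := by
    push_cast
    calc s * (N * T) ≤ (1 - T⁻¹) * (N * T) := by gcongr
      _ = N * T - N := by field_simp
  have hS := isLeast_maxOver_of_hasTailMass (by omega) (by omega) hNM hs0 hsM
  have ha : 0 < (1 - s) / N := div_pos (by linarith [inv_pos.2 hT]) hNR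
  simp only [altFeasible_iff (by omega : L ≠ 0)]
  rw [← log_mul ha.ne' (by positivity), mul_comm ((1 - s) / N)]
  refine ⟨?_, ?_⟩
  · obtain ⟨p, hp, hmax⟩ := hS.1
    exact ⟨p, hp, by rw [hmax]⟩
  · rintro _ ⟨p, hp, rfl⟩
    exact log_le_log (by positivity) (by gcongr; exact hS.2 ⟨p, hp, rfl⟩)
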